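/- arXiv:1609.08070 — 3 statements merged into one kernel-verified Lean document; each statement's English description precedes it below -/
import Mathlib

section
/- Let A be a finite-dimensional k-algebra, and let ι: N → M be an injective A-module homomorphism such that Hom_A(N/rad(N), M/(ι(N) + rad(M))) = 0 (i.e., the heads of N and M/ι(N) share no common simple quotient). Then any surjective A-module homomorphism π: M → N is split, and in fact ι(N) ∩ ker(π) = 0 and M = ι(N) ⊕ ker(π). -/
/-!
As `M` has finite length, `M ⧸ (ι(N) + rad M)` is semisimple, so its quotient map onto
`M ⧸ (ι(N) + ker π + rad M)` splits.
Composing the splitting with `N ≅ M ⧸ ker π ↠ M ⧸ (ι(N) + ker π + rad M)` gives a map from `N` to a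
semisimple module; such a map kills `rad N`, so it vanishes by hypothesis, and therefore
`ι(N) + ker π + rad M = M`. Since `rad M` lies in every maximal submodule, `ι(N) + ker π = M`.
Then `π ∘ ι` is a surjective, hence (by finite length) bijective, endomorphism of `N`, and
`ι ∘ (π ∘ ι)⁻¹` splits `π`.
-/

/-- The (Jacobson) radical of a module: the intersection of all maximal submodules. -/
def modRad (A : Type*) [Ring A] (M : Type*) [AddCommGroup M] [Module A M] :
    Submodule A M :=
  sInf {m : Submodule A M | IsCoatom m}

open Submodule LinearMap

section

variable {A M N X : Type*} [Ring A] [AddCommGroup M] [Module A M] [AddCommGroup N] [Module A N]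
  [AddCommGroup X] [Module A X]

theorem IsArtinian.isSemisimpleModule_quotient_of_jacobson_le [IsArtinian A M]
    {r : Submodule A M} (h : Module.jacobson A M ≤ r) : IsSemisimpleModule A (M ⧸ r) :=
  have : IsSemisimpleModule A (M ⧸ Module.jacobson A M) :=
    (IsArtinian.isSemisimpleModule_iff_jacobson A _).mpr (Module.jacobson_quotient_jacobson A M)
  .of_surjective _ (factor_surjective h)

theorem Module.eq_top_of_sup_jacobson_eq_top [IsCoatomic (Submodule A M)] {p : Submodule A M}
    (h : p ⊔ Module.jacobson A M = ⊤) : p = ⊤ := by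
  by_contra hp
  obtain ⟨m, hm, hpm⟩ := (eq_top_or_exists_le_coatom p).resolve_left hp
  exact hm.1 (top_le_iff.mp (h ▸ sup_le hpm (sInf_le hm)))

theorem LinearMap.jacobson_le_ker [IsSemisimpleModule A X] (g : N →ₗ[A] X) :
    Module.jacobson A N ≤ ker g := by
  have := Module.map_jacobson_le g
  rwa [IsSemisimpleModule.jacobson_eq_bot A X, map_le_iff_le_comap, comap_bot] at this

theorem LinearMap.eq_zero_of_forall_quotient_jacobson [IsSemisimpleModule A X]
    (h : ∀ f : (N ⧸ Module.jacobson A N) →ₗ[A] X, f = 0) (g : N →ₗ[A] X) : g = 0 := by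
  rw [← (Module.jacobson A N).liftQ_mkQ g g.jacobson_le_ker, h (liftQ _ g _), zero_comp]

theorem sup_ker_eq_top_of_forall_eq_zero {r : Submodule A M} [IsSemisimpleModule A (M ⧸ r)]
    {π : M →ₗ[A] N} (hπ : Function.Surjective π) (hr : ∀ g : N →ₗ[A] M ⧸ r, g = 0) :
    r ⊔ ker π = ⊤ := by
  set P := r ⊔ ker π
  obtain ⟨s, hs⟩ := IsSemisimpleModule.lifting_property (factor (le_sup_left : r ≤ P))
    (factor_surjective _) LinearMap.id
  let g : N →ₗ[A] M ⧸ P := factor le_sup_right ∘ₗ (π.quotKerEquivOfSurjective hπ).symm.toLinearMap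
  have hg : g ∘ₗ π = P.mkQ := by ext; simp [g]
  have : g = 0 := by
    rw [← LinearMap.id_comp g, ← hs, LinearMap.comp_assoc, hr (s ∘ₗ g), comp_zero]
  rw [← ker_mkQ P, ← hg, this, zero_comp, ker_zero]

theorem LinearMap.surjective_comp_of_sup_ker_eq_top {ι : N →ₗ[A] M} {π : M →ₗ[A] X}
    (hπ : Function.Surjective π) (h : range ι ⊔ ker π = ⊤) : Function.Surjective (π ∘ₗ ι) := by
  rw [← range_eq_top, range_comp]
  exact (map_eq_top_iff (range_eq_top.mpr hπ)).mpr h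

theorem LinearMap.disjoint_range_ker_of_injective_comp {ι : N →ₗ[A] M} {π : M →ₗ[A] X}
    (h : Function.Injective (π ∘ₗ ι)) : Disjoint (range ι) (ker π) := by
  rw [disjoint_iff_inf_le]
  rintro _ ⟨⟨y, rfl⟩, hy⟩
  rw [h (by simpa using hy : (π ∘ₗ ι) y = (π ∘ₗ ι) 0), map_zero]
  exact zero_mem _

theorem sup_ker_eq_top_of_forall_quotient_jacobson [IsArtinian A M] [IsCoatomic (Submodule A M)]
    {L : Submodule A M} {π : M →ₗ[A] N} (hπ : Function.Surjective π)
    (hL : ∀ f : (N ⧸ Module.jacobson A N) →ₗ[A] M ⧸ (L ⊔ Module.jacobson A M), f = 0) :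
    L ⊔ ker π = ⊤ := by
  have := IsArtinian.isSemisimpleModule_quotient_of_jacobson_le
    (le_sup_right : Module.jacobson A M ≤ L ⊔ Module.jacobson A M)
  have hsup := sup_ker_eq_top_of_forall_eq_zero hπ (eq_zero_of_forall_quotient_jacobson hL)
  exact Module.eq_top_of_sup_jacobson_eq_top (by rwa [sup_right_comm])

end

theorem stmt0_general (k A : Type*) [Field k] [Ring A] [Algebra k A]
    (N M : Type*) [AddCommGroup N] [Module A N] [Module k N] [IsScalarTower k A N]
    [FiniteDimensional k N]
    [AddCommGroup M] [Module A M] [Module k M] [IsScalarTower k A M]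
    [FiniteDimensional k M]
    (ι : N →ₗ[A] M)
    (hhom : ∀ f : (N ⧸ modRad A N) →ₗ[A]
      (M ⧸ (LinearMap.range ι ⊔ modRad A M)), f = 0)
    (π : M →ₗ[A] N) (hπ : Function.Surjective π) :
    (∃ σ : N →ₗ[A] M, π ∘ₗ σ = LinearMap.id) ∧
      Function.Bijective (π ∘ₗ ι) ∧
      LinearMap.range ι ⊓ LinearMap.ker π = ⊥ ∧
      LinearMap.range ι ⊔ LinearMap.ker π = ⊤ := by
  have : IsArtinian A M := isArtinian_of_tower k inferInstance
  have : IsNoetherian A M := isNoetherian_of_tower k inferInstance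
  have : IsNoetherian A N := isNoetherian_of_tower k inferInstance
  -- `modRad A M` is `Module.jacobson A M` by unfolding.
  have hsup : range ι ⊔ ker π = ⊤ := sup_ker_eq_top_of_forall_quotient_jacobson hπ hhom
  have hbij : Function.Bijective (π ∘ₗ ι) :=
    IsNoetherian.bijective_of_surjective_endomorphism _ (surjective_comp_of_sup_ker_eq_top hπ hsup)
  refine ⟨⟨ι ∘ₗ (LinearEquiv.ofBijective _ hbij).symm.toLinearMap, ?_⟩, hbij,
    disjoint_iff.mp (disjoint_range_ker_of_injective_comp hbij.1), hsup⟩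
  ext n
  exact (LinearEquiv.ofBijective _ hbij).apply_symm_apply n

theorem stmt0 (k A : Type*) [Field k] [Ring A] [Algebra k A] [FiniteDimensional k A]
    (N M : Type*) [AddCommGroup N] [Module A N] [Module k N] [IsScalarTower k A N]
    [FiniteDimensional k N]
    [AddCommGroup M] [Module A M] [Module k M] [IsScalarTower k A M]
    [FiniteDimensional k M]
    (ι : N →ₗ[A] M) (hι : Function.Injective ι)
    (hhom : ∀ f : (N ⧸ modRad A N) →ₗ[A]
      (M ⧸ (LinearMap.range ι ⊔ modRad A M)), f = 0)
    (π : M →ₗ[A] N) (hπ : Function.Surjective π) :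
    (∃ σ : N →ₗ[A] M, π ∘ₗ σ = LinearMap.id) ∧
      Function.Bijective (π ∘ₗ ι) ∧
      LinearMap.range ι ⊓ LinearMap.ker π = ⊥ ∧
      LinearMap.range ι ⊔ LinearMap.ker π = ⊤ :=
  stmt0_general k A N M ι hhom π hπ
end

section
/- Let G be a finite group, p a prime dividing |G|, and k a field of characteristic p. If the trivial kG-module k_G is the unique simple module in the principal block and the multiplicity of k_G as a composition factor of its projective cover P(k_G) equals 2, then p = 2. -/
/-- The trivial module `k` for the group algebra `kG`. -/
def TrivialModule (k G : Type*) := k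

instance (k G : Type*) [Field k] : AddCommGroup (TrivialModule k G) :=
  inferInstanceAs (AddCommGroup k)

instance (k G : Type*) [Field k] : Module k (TrivialModule k G) :=
  inferInstanceAs (Module k k)

/-- The group algebra acts on the trivial module via the augmentation map. -/
noncomputable instance (k G : Type*) [Field k] [Group G] :
    Module (MonoidAlgebra k G) (TrivialModule k G) :=
  Module.compHom (TrivialModule k G) ((MonoidAlgebra.lift k k G) 1).toRingHom

/-!
Lift `P → P ⧸ L ≅ k` through the augmentation `kG → k` to `h : P → kG` and put `a = h v` for
some `v` mapping to `1`. As `G` acts trivially on `P ⧸ L` and on `L`, each `(g - 1) a` is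
`G`-fixed, hence has constant coefficients; this makes `x ↦ a(x) - a(1)` a homomorphism
`G → k`. Its sum is `∑ a(x) - |G| a(1) = 1`, yet substituting `x ↦ x⁻¹` shows the sum is its own
negative, so `2 = 0` in `k`.
-/

open MonoidAlgebra

theorem two_nsmul_sum_eq_zero_of_map_mul {G M : Type*} [Group G] [Fintype G] [AddCommGroup M]
    (d : G → M) (hd : ∀ x y, d (x * y) = d x + d y) : 2 • ∑ g, d g = 0 := by
  have d_one : d 1 = 0 := by simpa using hd 1 1
  have d_inv (g : G) : d g⁻¹ = -d g :=
    eq_neg_of_add_eq_zero_left (by rw [← hd, inv_mul_cancel, d_one])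
  have sum_eq_neg : ∑ g, d g = -∑ g, d g :=
    calc ∑ g, d g = ∑ g, d g⁻¹ := (Fintype.sum_equiv (Equiv.inv G) _ _ fun _ => rfl).symm
      _ = -∑ g, d g := by simp only [d_inv, Finset.sum_neg_distrib]
  rw [two_nsmul]
  nth_rw 2 [sum_eq_neg]
  exact add_neg_cancel _

namespace MonoidAlgebra

variable {k G : Type*}

theorem lift_one_apply_eq_sum_coeff [CommSemiring k] [Monoid G] [Fintype G]
    (a : MonoidAlgebra k G) : lift k k G 1 a = ∑ g, a.coeff g := by
  rw [lift_apply, Finsupp.sum_fintype _ _ (by simp)]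
  simp

theorem coeff_eq_coeff_one_of_forall_single_mul_eq [Semiring k] [Group G]
    {b : MonoidAlgebra k G} (hb : ∀ σ : G, single σ 1 * b = b) (x : G) :
    b.coeff x = b.coeff 1 := by
  simpa using (congrArg (coeff · x) (hb x)).symm

variable [CommRing k] [Group G]

theorem coeff_mul_sub_coeff_one_eq_add {a : MonoidAlgebra k G}
    (ha : ∀ g σ : G, single σ 1 * (single g 1 * a - a) = single g 1 * a - a) (x y : G) :
    a.coeff (x * y) - a.coeff 1 = (a.coeff x - a.coeff 1) + (a.coeff y - a.coeff 1) := by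
  have hy := coeff_eq_coeff_one_of_forall_single_mul_eq (ha x⁻¹) y
  simp only [coeff_sub, Finsupp.sub_apply, coeff_single_mul_apply, inv_inv, one_mul,
    mul_one] at hy
  linear_combination hy

theorem two_eq_zero_of_lift_eq_one [Fintype G] (hG : (Fintype.card G : k) = 0)
    {a : MonoidAlgebra k G} (ha₁ : lift k k G 1 a = 1)
    (ha : ∀ g σ : G, single σ 1 * (single g 1 * a - a) = single g 1 * a - a) :
    (2 : k) = 0 := by
  have sum_eq_one : ∑ g, (a.coeff g - a.coeff 1) = 1 := by
    rw [Finset.sum_sub_distrib, ← lift_one_apply_eq_sum_coeff, ha₁]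
    simp [hG]
  simpa [sum_eq_one] using
    two_nsmul_sum_eq_zero_of_map_mul (fun g => a.coeff g - a.coeff 1)
      (coeff_mul_sub_coeff_one_eq_add ha)

end MonoidAlgebra

namespace TrivialModule

variable {k G : Type*} [Field k] [Group G]

theorem single_one_smul (g : G) (x : TrivialModule k G) : single g (1 : k) • x = x := by
  change (lift k k G 1 (single g 1)) • x = x
  rw [lift_single, one_smul, MonoidHom.one_apply, one_smul]

theorem single_one_smul_of_equiv {N : Type*} [AddCommGroup N] [Module (MonoidAlgebra k G) N]
    (e : N ≃ₗ[MonoidAlgebra k G] TrivialModule k G) (g : G) (x : N) :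
    single g (1 : k) • x = x :=
  e.injective <| (e.map_smul _ _).trans (single_one_smul g _)

variable (k G) in
noncomputable def augmentation : MonoidAlgebra k G →ₗ[MonoidAlgebra k G] TrivialModule k G :=
  LinearMap.toSpanSingleton _ _ (1 : k)

theorem augmentation_apply (a : MonoidAlgebra k G) :
    (augmentation k G a : k) = lift k k G 1 a :=
  mul_one (lift k k G 1 a)

theorem augmentation_surjective : Function.Surjective (augmentation k G) :=
  fun (x : k) => ⟨single 1 x, (augmentation_apply _).trans <|
    (lift_single (1 : G →* k) 1 x).trans (mul_one x)⟩

end TrivialModule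

open TrivialModule in
theorem exists_lift_eq_one_of_projective_of_trivial_factors {k G M : Type*} [Field k] [Group G]
    [AddCommGroup M] [Module (MonoidAlgebra k G) M] [Module.Projective (MonoidAlgebra k G) M]
    {L : Submodule (MonoidAlgebra k G) M} (e₁ : L ≃ₗ[MonoidAlgebra k G] TrivialModule k G)
    (e₂ : (M ⧸ L) ≃ₗ[MonoidAlgebra k G] TrivialModule k G) :
    ∃ a : MonoidAlgebra k G, lift k k G 1 a = 1 ∧
      ∀ g σ : G, single σ 1 * (single g 1 * a - a) = single g 1 * a - a := by
  set φ := e₂.toLinearMap ∘ₗ L.mkQ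
  have ker_φ : LinearMap.ker φ = L := by
    rw [LinearEquiv.ker_comp, Submodule.ker_mkQ]
  obtain ⟨h, hh⟩ :=
    Module.projective_lifting_property (augmentation k G) φ augmentation_surjective
  obtain ⟨v, hv⟩ : ∃ v, φ v = (1 : k) := (e₂.surjective.comp L.mkQ_surjective) _
  refine ⟨h v, ?_, fun g σ => ?_⟩
  · rw [← augmentation_apply, ← LinearMap.comp_apply, hh, hv]
  · have mem_L : single g (1 : k) • v - v ∈ L := by
      rw [← ker_φ, LinearMap.mem_ker, map_sub, map_smul, single_one_smul, sub_self]
    have fixed : single σ (1 : k) • (single g (1 : k) • v - v) = single g (1 : k) • v - v :=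
      congrArg Subtype.val (single_one_smul_of_equiv e₁ σ ⟨_, mem_L⟩)
    simp only [← smul_eq_mul, ← map_smul, ← map_sub, fixed]

theorem stmt4_general (k : Type*) [Field k] (p : ℕ) [Fact p.Prime] [CharP k p]
    (G : Type*) [Group G] [Fintype G] (hdvd : p ∣ Fintype.card G)
    -- `P` is the projective cover of the trivial `kG`-module:
    (P : Type*) [AddCommGroup P] [Module (MonoidAlgebra k G) P]
    [Module.Projective (MonoidAlgebra k G) P]
    -- composition series of `P` with exactly two factors, both trivial:
    (L : Submodule (MonoidAlgebra k G) P)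
    (hL1 : Nonempty (L ≃ₗ[MonoidAlgebra k G] TrivialModule k G))
    (hL2 : Nonempty ((P ⧸ L) ≃ₗ[MonoidAlgebra k G] TrivialModule k G)) :
    p = 2 := by
  obtain ⟨e₁⟩ := hL1
  obtain ⟨e₂⟩ := hL2
  obtain ⟨a, ha₁, ha⟩ := exists_lift_eq_one_of_projective_of_trivial_factors e₁ e₂
  have card_eq_zero : (Fintype.card G : k) = 0 := (CharP.cast_eq_zero_iff k p _).mpr hdvd
  have two_eq_zero : ((2 : ℕ) : k) = 0 := mod_cast two_eq_zero_of_lift_eq_one card_eq_zero ha₁ ha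
  exact (Nat.prime_dvd_prime_iff_eq Fact.out Nat.prime_two).mp
    ((CharP.cast_eq_zero_iff k p 2).mp two_eq_zero)

/-- If the trivial module is the unique simple module in the principal block (so that every
composition factor of `P(k_G)` is trivial) and the Cartan invariant `[P(k_G) : k_G] = 2`,
i.e. `P(k_G)` has a composition series `0 < L < P` with both factors trivial, then `p = 2`. -/
theorem stmt4 (k : Type*) [Field k] (p : ℕ) [Fact p.Prime] [CharP k p]
    (G : Type*) [Group G] [Fintype G] (hdvd : p ∣ Fintype.card G)
    -- `P` is the projective cover of the trivial `kG`-module: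
    (P : Type*) [AddCommGroup P] [Module (MonoidAlgebra k G) P]
    [Module k P] [IsScalarTower k (MonoidAlgebra k G) P] [FiniteDimensional k P]
    [Module.Projective (MonoidAlgebra k G) P]
    (f : P →ₗ[MonoidAlgebra k G] TrivialModule k G)
    (hf : Function.Surjective f)
    (hess : LinearMap.ker f ≤ modRad (MonoidAlgebra k G) P)
    -- composition series of `P` with exactly two factors, both trivial:
    (L : Submodule (MonoidAlgebra k G) P)
    (hL1 : Nonempty (L ≃ₗ[MonoidAlgebra k G] TrivialModule k G))
    (hL2 : Nonempty ((P ⧸ L) ≃ₗ[MonoidAlgebra k G] TrivialModule k G)) :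
    p = 2 :=
  stmt4_general k p G hdvd P L hL1 hL2
end

section
/- Let G be a finite group and k a field of characteristic p dividing |G|. If the unique simple module in the principal block of kG is the trivial module k_G and the Cartan invariant [P(k_G):k_G] = 3, then p = 3 and the Sylow p-subgroups of G have order 3. -/
/-!
The composition factors of `P` are trivial, so the augmentation ideal `I` of `kG` satisfies
`I³ P = 0`, and `dim P = 3`. For a subgroup `H` with norm element `N_H = ∑_{h ∈ H} h`,
projectivity of `P` gives that every `m ∈ P` with `N_H m = 0` lies in `I_H P`, the span of the
`(h - 1) m'` (the vanishing of `Ĥ⁻¹(H, P)`). Hence `N_H ∉ I³`: otherwise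
`P = I_H P ⊆ I P ⊆ I² P ⊆ I³ P = 0`.

In characteristic `p` an element `g` of order `p` has norm `(g - 1)^(p-1)`, which lies in `I³` as
soon as `p ≥ 5`. For `p = 2`, the same kernel statement gives `ker (g - 1) = im (g - 1)` on `P`,
so `dim P` is even. Thus `p = 3`. Finally, a subgroup `H` of order `9` containing some `a` of
order `3` would have norm `N_⟨a⟩ x = (a - 1)² x` with augmentation `ε x = [H : ⟨a⟩] = 0`, again
an element of `I³`; so the Sylow `3`-subgroups have order `3`.
-/

section GroupAlgebra

open MonoidAlgebra

variable {k G : Type*} [Field k]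

theorem TrivialModule.finrank_eq_one : Module.finrank k (TrivialModule k G) = 1 :=
  Module.finrank_self k

theorem sum_single_coeff [Fintype G] (m : MonoidAlgebra k G) :
    ∑ g : G, single g (m.coeff g) = m := by
  conv_rhs => rw [← sum_coeff_single m]
  exact (Finsupp.sum_fintype _ _ fun g => single_zero g).symm

variable [Group G]

namespace TrivialModule

instance : IsScalarTower k (MonoidAlgebra k G) (TrivialModule k G) :=
  ⟨fun c x m => show lift k k G 1 (c • x) • m = c • lift k k G 1 x • m by
    rw [map_smul, smul_eq_mul, mul_smul]⟩

theorem smul_def (x : MonoidAlgebra k G) (m : TrivialModule k G) :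
    x • m = lift k k G 1 x • m :=
  rfl

end TrivialModule

section TrivialQuotients

variable {M : Type*} [AddCommGroup M] [Module (MonoidAlgebra k G) M] {x : MonoidAlgebra k G}

theorem smul_eq_zero_of_equiv_trivialModule (e : M ≃ₗ[MonoidAlgebra k G] TrivialModule k G)
    (hx : lift k k G 1 x = 0) (m : M) : x • m = 0 :=
  e.injective <| by rw [map_smul, TrivialModule.smul_def, hx, zero_smul, map_zero]

theorem smul_mem_of_quotient_equiv_trivialModule {L : Submodule (MonoidAlgebra k G) M}
    (e : (M ⧸ L) ≃ₗ[MonoidAlgebra k G] TrivialModule k G) (hx : lift k k G 1 x = 0) (m : M) :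
    x • m ∈ L :=
  (Submodule.Quotient.mk_eq_zero L).1 <| by
    rw [Submodule.Quotient.mk_smul]; exact smul_eq_zero_of_equiv_trivialModule e hx _

variable [Module k M] [IsScalarTower k (MonoidAlgebra k G) M]

theorem finrank_quotient_add_finrank_of_isScalarTower [FiniteDimensional k M]
    (L : Submodule (MonoidAlgebra k G) M) :
    Module.finrank k (M ⧸ L) + Module.finrank k L = Module.finrank k M := by
  rw [← Submodule.finrank_quotient_add_finrank (L.restrictScalars k)]
  congr 1

end TrivialQuotients

section AugmentationSpan

variable (k) in
/-- `I_H M`, the image of `M` under the augmentation ideal of `kH`. -/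
def augmentationSpan (H : Subgroup G) (M : Type*) [AddCommGroup M]
    [Module (MonoidAlgebra k G) M] [Module k M] : Submodule k M :=
  Submodule.span k {m | ∃ h ∈ H, ∃ y : M, m = (single h (1 : k) - 1) • y}

variable {H : Subgroup G} {M M' : Type*} [AddCommGroup M] [Module (MonoidAlgebra k G) M]
  [Module k M] [AddCommGroup M'] [Module (MonoidAlgebra k G) M'] [Module k M']

theorem augmentationSpan_le {L : Submodule k M}
    (hL : ∀ x : MonoidAlgebra k G, lift k k G 1 x = 0 → ∀ m : M, x • m ∈ L) :
    augmentationSpan k H M ≤ L :=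
  Submodule.span_le.2 fun _ ⟨h, _, y, hm⟩ => hm ▸ hL _ (by simp) y

variable [IsScalarTower k (MonoidAlgebra k G) M] [IsScalarTower k (MonoidAlgebra k G) M']

theorem map_mem_augmentationSpan (φ : M →ₗ[MonoidAlgebra k G] M') {m : M}
    (hm : m ∈ augmentationSpan k H M) : φ m ∈ augmentationSpan k H M' := by
  refine (Submodule.map_span_le (φ.restrictScalars k) _ _).2 ?_ ⟨m, hm, rfl⟩
  rintro _ ⟨h, hh, y, rfl⟩
  exact Submodule.subset_span ⟨h, hh, φ y, φ.map_smul _ _⟩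

end AugmentationSpan

variable (k) in
noncomputable def subgroupNorm (H : Subgroup G) [Fintype H] : MonoidAlgebra k G :=
  ∑ h : H, single (h : G) 1

theorem coeff_subgroupNorm_mul (H : Subgroup G) [Fintype H] (m : MonoidAlgebra k G) (g : G) :
    (subgroupNorm k H * m).coeff g = ∑ h : H, m.coeff (h * g) := by
  rw [subgroupNorm, Finset.sum_mul, coeff_sum, Finsupp.finsetSum_apply]
  exact Fintype.sum_equiv (Equiv.inv H) _ _ fun h => by simp [coeff_single_mul_apply]

theorem mem_augmentationSpan_of_subgroupNorm_mul_eq_zero [Fintype G] (H : Subgroup G)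
    [Fintype H] {m : MonoidAlgebra k G} (hm : subgroupNorm k H * m = 0) :
    m ∈ augmentationSpan k H (MonoidAlgebra k G) := by
  classical
  obtain ⟨T, hT, -⟩ := H.exists_isComplement_right 1
  set π : G → G := fun g => (hT.equiv g).2
  have hπ : ∀ g, g * (π g)⁻¹ ∈ H := fun g => by
    rw [← hT.equiv_fst_eq_mul_inv]; exact (hT.equiv g).1.2
  have hcosets : ∑ g, single (π g) (m.coeff g) = 0 := by
    calc ∑ g, single (π g) (m.coeff g)
        = ∑ x : H × T, single (x.2 : G) (m.coeff (x.1 * x.2)) :=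
          Fintype.sum_equiv hT.equiv _ _ fun g => by simp [π, hT.equiv_fst_mul_equiv_snd]
      _ = ∑ t : T, single (t : G) ((subgroupNorm k H * m).coeff t) := by
          rw [Fintype.sum_prod_type_right]
          refine Finset.sum_congr rfl fun t _ => ?_
          rw [coeff_subgroupNorm_mul]
          exact (map_sum (singleAddHom (t : G)) _ _).symm
      _ = 0 := by simp [hm]
  have hdecomp : m = ∑ g, (single g (m.coeff g) - single (π g) (m.coeff g)) := by
    rw [Finset.sum_sub_distrib, hcosets, sub_zero, sum_single_coeff]
  rw [hdecomp]
  refine Submodule.sum_mem _ fun g _ => Submodule.subset_span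
    ⟨g * (π g)⁻¹, hπ g, single (π g) (m.coeff g), ?_⟩
  rw [smul_eq_mul, sub_mul, single_mul_single, one_mul, inv_mul_cancel_right, one_mul]

theorem mem_augmentationSpan_of_subgroupNorm_smul_eq_zero [Fintype G] (H : Subgroup G)
    [Fintype H] {M : Type*} [AddCommGroup M] [Module (MonoidAlgebra k G) M] [Module k M]
    [IsScalarTower k (MonoidAlgebra k G) M] [Module.Finite (MonoidAlgebra k G) M]
    [Module.Projective (MonoidAlgebra k G) M] {m : M} (hm : subgroupNorm k H • m = 0) :
    m ∈ augmentationSpan k H M := by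
  obtain ⟨n, π, hπ⟩ := Module.Finite.exists_fin' (MonoidAlgebra k G) M
  obtain ⟨s, hs⟩ := Module.projective_lifting_property π LinearMap.id hπ
  have hfree : s m ∈ augmentationSpan k H (Fin n → MonoidAlgebra k G) := by
    rw [← Finset.univ_sum_single (s m)]
    refine Submodule.sum_mem _ fun i _ => ?_
    refine map_mem_augmentationSpan
      (LinearMap.single (MonoidAlgebra k G) (fun _ : Fin n => MonoidAlgebra k G) i)
      (mem_augmentationSpan_of_subgroupNorm_mul_eq_zero H ?_)
    exact congrFun (by rw [← map_smul, hm, map_zero] : subgroupNorm k H • s m = 0) i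
  simpa [← LinearMap.comp_apply, hs] using map_mem_augmentationSpan π hfree

theorem geom_sum_eq_sub_one_pow_of_charP (k : Type*) [CommRing k] (p : ℕ) [Fact p.Prime]
    [CharP k p] {A : Type*} [Ring A] [Algebra k A] (x : A) :
    ∑ i ∈ Finset.range p, x ^ i = (x - 1) ^ (p - 1) := by
  simpa [Polynomial.cyclotomic_prime, Polynomial.cyclotomic_one] using
    congrArg (Polynomial.aeval x)
      (Polynomial.cyclotomic_mul_prime_eq_pow_of_not_dvd k (n := 1) (p := p)
        (Nat.Prime.not_dvd_one Fact.out))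

theorem subgroupNorm_zpowers {g : G} (hg : IsOfFinOrder g) [Fintype (Subgroup.zpowers g)] :
    subgroupNorm k (Subgroup.zpowers g) =
      ∑ i ∈ Finset.range (orderOf g), single g (1 : k) ^ i := by
  rw [subgroupNorm, ← Fin.sum_univ_eq_sum_range]
  exact (Fintype.sum_equiv (finEquivZPowers hg) _ _ fun i => by
    simp [single_pow, finEquivZPowers_apply]).symm

theorem exists_subgroupNorm_eq_mul {K H : Subgroup G} [Fintype K] [Fintype H] (hKH : K ≤ H) :
    ∃ x : MonoidAlgebra k G, lift k k G 1 x = K.relIndex H ∧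
      subgroupNorm k H = subgroupNorm k K * x := by
  classical
  obtain ⟨T, hT, -⟩ := (K.subgroupOf H).exists_isComplement_right 1
  refine ⟨∑ t : T, single ((t : H) : G) 1, ?_, ?_⟩
  · simp [Subgroup.relIndex, ← hT.card_right, Nat.card_eq_fintype_card]
  · rw [subgroupNorm, subgroupNorm, Finset.sum_mul_sum,
      ← Fintype.sum_equiv (Subgroup.subgroupOfEquivOfLe hKH).toEquiv
        (fun k' => ∑ t : T, single ((k' : H) : G) (1 : k) * single ((t : H) : G) 1) _
        fun _ => rfl,
      ← Fintype.sum_prod_type', Fintype.sum_equiv hT.equiv _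
        (fun x => single (((x.1 : H) : G) * ((x.2 : H) : G)) (1 : k))]
    · simp [single_mul_single]
    · intro h; simp [← Subgroup.coe_mul, hT.equiv_fst_mul_equiv_snd]

section CyclicAction

variable {M : Type*} [AddCommGroup M] [Module (MonoidAlgebra k G) M] [Module k M]
  [IsScalarTower k (MonoidAlgebra k G) M]

theorem augmentationSpan_zpowers_le_range {g : G} (hg : IsOfFinOrder g) :
    augmentationSpan k (Subgroup.zpowers g) M ≤
      LinearMap.range (DistribSMul.toLinearMap k M (single g (1 : k) - 1)) := by
  refine Submodule.span_le.2 ?_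
  rintro _ ⟨h, hh, y, rfl⟩
  obtain ⟨n, rfl⟩ := hg.mem_powers_iff_mem_zpowers.2 hh
  refine ⟨(∑ i ∈ Finset.range n, single g (1 : k) ^ i) • y, ?_⟩
  rw [DistribSMul.toLinearMap_apply, smul_smul, mul_geom_sum, single_pow, one_pow]

theorem even_finrank_of_two_dvd_card [CharP k 2] [Fintype G] (h2 : 2 ∣ Fintype.card G)
    [FiniteDimensional k M] [Module.Projective (MonoidAlgebra k G) M] :
    Even (Module.finrank k M) := by
  classical
  have := Module.Finite.of_restrictScalars_finite k (MonoidAlgebra k G) M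
  obtain ⟨g, hg⟩ := exists_prime_orderOf_dvd_card 2 h2
  set x := single g (1 : k)
  set v := DistribSMul.toLinearMap k M (x - 1)
  have hnorm : subgroupNorm k (Subgroup.zpowers g) = x - 1 := by
    rw [subgroupNorm_zpowers (isOfFinOrder_of_finite g), hg,
      geom_sum_eq_sub_one_pow_of_charP k 2, pow_one]
  have hsq : (x - 1) * (x - 1) = 0 := by
    calc (x - 1) * (x - 1) = (x - 1) * ∑ i ∈ Finset.range (orderOf g), x ^ i := by
          rw [hg, geom_sum_eq_sub_one_pow_of_charP k 2, pow_one]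
      _ = 0 := by rw [mul_geom_sum, single_pow, pow_orderOf_eq_one, one_pow, ← one_def, sub_self]
  have hker : LinearMap.ker v = LinearMap.range v := by
    refine le_antisymm (fun m hm => ?_) ?_
    · refine augmentationSpan_zpowers_le_range (isOfFinOrder_of_finite g) <|
        mem_augmentationSpan_of_subgroupNorm_smul_eq_zero _ ?_
      rwa [hnorm]
    · rintro _ ⟨m, rfl⟩
      simp [v, smul_smul, hsq]
  have hrank := LinearMap.finrank_range_add_finrank_ker v
  rw [hker] at hrank
  exact ⟨_, hrank.symm⟩

end CyclicAction

section TrivialFactorSeries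

variable {P : Type*} [AddCommGroup P] [Module (MonoidAlgebra k G) P]

structure TrivialFactorSeries (L₁ L₂ : Submodule (MonoidAlgebra k G) P) where
  bot : L₁ ≃ₗ[MonoidAlgebra k G] TrivialModule k G
  mid : (L₂ ⧸ L₁.comap L₂.subtype) ≃ₗ[MonoidAlgebra k G] TrivialModule k G
  top : (P ⧸ L₂) ≃ₗ[MonoidAlgebra k G] TrivialModule k G

namespace TrivialFactorSeries

variable {L₁ L₂ : Submodule (MonoidAlgebra k G) P} {x y z : MonoidAlgebra k G}

theorem mul_mul_smul_eq_zero (S : TrivialFactorSeries L₁ L₂) (hx : lift k k G 1 x = 0)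
    (hy : lift k k G 1 y = 0) (hz : lift k k G 1 z = 0) (m : P) : (x * y * z) • m = 0 := by
  have hzm := smul_mem_of_quotient_equiv_trivialModule S.top hz m
  have hyzm := smul_mem_of_quotient_equiv_trivialModule S.mid hy ⟨_, hzm⟩
  rw [mul_smul, mul_smul]
  exact congrArg Subtype.val (smul_eq_zero_of_equiv_trivialModule S.bot hx ⟨_, hyzm⟩)

variable [Module k P] [IsScalarTower k (MonoidAlgebra k G) P]

theorem finrank_eq_three [FiniteDimensional k P] (S : TrivialFactorSeries L₁ L₂)
    (hle : L₁ ≤ L₂) : Module.finrank k P = 3 := by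
  have e₁ := (Submodule.comapSubtypeEquivOfLe hle).trans S.bot
  have : FiniteDimensional k L₂ := inferInstanceAs (FiniteDimensional k (L₂.restrictScalars k))
  rw [← finrank_quotient_add_finrank_of_isScalarTower L₂,
    ← finrank_quotient_add_finrank_of_isScalarTower (L₁.comap L₂.subtype),
    (S.top.restrictScalars k).finrank_eq, (S.mid.restrictScalars k).finrank_eq,
    (e₁.restrictScalars k).finrank_eq, TrivialModule.finrank_eq_one]

theorem not_forall_mem_augmentationSpan (S : TrivialFactorSeries L₁ L₂) (H : Subgroup G) :
    ¬ ∀ m : P, m ∈ augmentationSpan k H P := by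
  intro hP
  have h₂ (m : P) : m ∈ L₂ := augmentationSpan_le (L := L₂.restrictScalars k)
    (fun _ hx m => smul_mem_of_quotient_equiv_trivialModule S.top hx m) (hP m)
  have h₁ (m : P) : m ∈ L₁ := augmentationSpan_le (L := L₁.restrictScalars k)
    (fun _ hx m => smul_mem_of_quotient_equiv_trivialModule S.mid hx ⟨m, h₂ m⟩) (hP m)
  have h₀ (m : P) : m = 0 := augmentationSpan_le (L := ⊥) (fun _ hx m =>
    congrArg Subtype.val (smul_eq_zero_of_equiv_trivialModule S.bot hx ⟨m, h₁ m⟩)) (hP m)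
  have : Subsingleton P := ⟨fun a b => (h₀ a).trans (h₀ b).symm⟩
  exact not_subsingleton k S.bot.toEquiv.symm.subsingleton

variable [FiniteDimensional k P] [Module.Projective (MonoidAlgebra k G) P] [Fintype G]

theorem subgroupNorm_ne_mul_mul (S : TrivialFactorSeries L₁ L₂) (H : Subgroup G) [Fintype H]
    (hx : lift k k G 1 x = 0) (hy : lift k k G 1 y = 0) (hz : lift k k G 1 z = 0) :
    subgroupNorm k H ≠ x * y * z := by
  have := Module.Finite.of_restrictScalars_finite k (MonoidAlgebra k G) P
  intro hN
  refine S.not_forall_mem_augmentationSpan H fun m =>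
    mem_augmentationSpan_of_subgroupNorm_smul_eq_zero H ?_
  rw [hN, S.mul_mul_smul_eq_zero hx hy hz]

theorem prime_eq_three (S : TrivialFactorSeries L₁ L₂) (hle : L₁ ≤ L₂) (p : ℕ) [Fact p.Prime]
    [CharP k p] (hdvd : p ∣ Fintype.card G) : p = 3 := by
  classical
  have hp : p.Prime := Fact.out
  rcases hp.eq_two_or_odd with rfl | hodd
  · have := even_finrank_of_two_dvd_card (k := k) (M := P) hdvd
    rw [S.finrank_eq_three hle] at this
    exact absurd this (by decide)
  by_contra hp3
  have hp5 : 5 ≤ p := by have := hp.two_le; omega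
  obtain ⟨g, hg⟩ := exists_prime_orderOf_dvd_card p hdvd
  set a := single g (1 : k) - 1
  have ha : lift k k G 1 a = 0 := by simp [a]
  refine S.subgroupNorm_ne_mul_mul (Subgroup.zpowers g) ha ha (z := a ^ (p - 3))
    (by rw [map_pow, ha, zero_pow (by omega)]) ?_
  rw [subgroupNorm_zpowers (isOfFinOrder_of_finite g), hg, geom_sum_eq_sub_one_pow_of_charP k p,
    show p - 1 = 2 + (p - 3) by omega, pow_add, sq]

theorem not_three_sq_dvd_card [CharP k 3] (S : TrivialFactorSeries L₁ L₂) :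
    ¬ 3 ^ 2 ∣ Nat.card G := by
  classical
  have : Fact (Nat.Prime 3) := ⟨Nat.prime_three⟩
  intro h9
  obtain ⟨H, hH⟩ := Sylow.exists_subgroup_card_pow_prime 3 h9
  obtain ⟨b, hb⟩ := exists_prime_orderOf_dvd_card' (G := H) 3 (by rw [hH]; norm_num)
  have hKH : Subgroup.zpowers (b : G) ≤ H := Subgroup.zpowers_le.2 b.2
  obtain ⟨y, hy, hN⟩ := exists_subgroupNorm_eq_mul (k := k) hKH
  have hindex : (Subgroup.zpowers (b : G)).relIndex H = 3 := by
    have := Subgroup.relIndex_mul_relIndex ⊥ _ _ bot_le hKH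
    rw [Subgroup.relIndex_bot_left, Subgroup.relIndex_bot_left, hH, Nat.card_zpowers,
      Subgroup.orderOf_coe, hb] at this
    omega
  set a := single (b : G) (1 : k) - 1
  have ha : lift k k G 1 a = 0 := by simp [a]
  refine S.subgroupNorm_ne_mul_mul H ha ha (z := y)
    (by rw [hy, hindex, Nat.cast_ofNat, CharP.ofNat_eq_zero]) ?_
  rw [hN, subgroupNorm_zpowers (isOfFinOrder_of_finite _), Subgroup.orderOf_coe, hb,
    geom_sum_eq_sub_one_pow_of_charP k 3, sq]

end TrivialFactorSeries

end TrivialFactorSeries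

theorem Sylow.card_eq_of_not_sq_dvd {p : ℕ} [Fact p.Prime] [Finite G] (Q : Sylow p G)
    (hdvd : p ∣ Nat.card G) (hsq : ¬ p ^ 2 ∣ Nat.card G) : Nat.card Q = p := by
  have hp : p.Prime := Fact.out
  have hG : Nat.card G ≠ 0 := Nat.card_pos.ne'
  have h1 := (hp.pow_dvd_iff_le_factorization (k := 1) hG).1 (by rwa [pow_one])
  have h2 := mt (hp.pow_dvd_iff_le_factorization (k := 2) hG).2 hsq
  rw [Q.card_eq_multiplicity, show (Nat.card G).factorization p = 1 by omega, pow_one]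

end GroupAlgebra

theorem stmt15_general (k : Type*) [Field k] (p : ℕ) [Fact p.Prime] [CharP k p]
    (G : Type*) [Group G] [Fintype G] (hdvd : p ∣ Fintype.card G)
    -- `P` is the projective cover of the trivial `kG`-module:
    (P : Type*) [AddCommGroup P] [Module (MonoidAlgebra k G) P]
    [Module k P] [IsScalarTower k (MonoidAlgebra k G) P] [FiniteDimensional k P]
    [Module.Projective (MonoidAlgebra k G) P]
    -- composition series of `P` with exactly three factors, all trivial:
    (L₁ L₂ : Submodule (MonoidAlgebra k G) P) (hle : L₁ ≤ L₂)
    (h1 : Nonempty (L₁ ≃ₗ[MonoidAlgebra k G] TrivialModule k G))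
    (h2 : Nonempty ((L₂ ⧸ (L₁.comap L₂.subtype)) ≃ₗ[MonoidAlgebra k G] TrivialModule k G))
    (h3 : Nonempty ((P ⧸ L₂) ≃ₗ[MonoidAlgebra k G] TrivialModule k G)) :
    p = 3 ∧ ∀ Q : Sylow p G, Nat.card Q = 3 := by
  let S : TrivialFactorSeries L₁ L₂ := ⟨h1.some, h2.some, h3.some⟩
  obtain rfl := S.prime_eq_three hle p hdvd
  refine ⟨rfl, fun Q => Q.card_eq_of_not_sq_dvd ?_ S.not_three_sq_dvd_card⟩
  rwa [Nat.card_eq_fintype_card]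

/-- If the trivial module is the unique simple module in the principal block (so that every
composition factor of `P(k_G)` is trivial) and the Cartan invariant `[P(k_G) : k_G] = 3`,
i.e. `P(k_G)` has a composition series `0 < L₁ < L₂ < P` with all three factors trivial,
then `p = 3` and the Sylow `p`-subgroups of `G` have order `3`. -/
theorem stmt15 (k : Type*) [Field k] (p : ℕ) [Fact p.Prime] [CharP k p]
    (G : Type*) [Group G] [Fintype G] (hdvd : p ∣ Fintype.card G)
    -- `P` is the projective cover of the trivial `kG`-module:
    (P : Type*) [AddCommGroup P] [Module (MonoidAlgebra k G) P]
    [Module k P] [IsScalarTower k (MonoidAlgebra k G) P] [FiniteDimensional k P]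
    [Module.Projective (MonoidAlgebra k G) P]
    (f : P →ₗ[MonoidAlgebra k G] TrivialModule k G)
    (hf : Function.Surjective f)
    (hess : LinearMap.ker f ≤ modRad (MonoidAlgebra k G) P)
    -- composition series of `P` with exactly three factors, all trivial:
    (L₁ L₂ : Submodule (MonoidAlgebra k G) P) (hle : L₁ ≤ L₂)
    (h1 : Nonempty (L₁ ≃ₗ[MonoidAlgebra k G] TrivialModule k G))
    (h2 : Nonempty ((L₂ ⧸ (L₁.comap L₂.subtype)) ≃ₗ[MonoidAlgebra k G] TrivialModule k G))
    (h3 : Nonempty ((P ⧸ L₂) ≃ₗ[MonoidAlgebra k G] TrivialModule k G)) :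
    p = 3 ∧ ∀ Q : Sylow p G, Nat.card Q = 3 :=
  stmt15_general k p G hdvd P L₁ L₂ hle h1 h2 h3
end
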